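/- Strict monotonicity of q-deformed irrationals: let 0 < q < 1 and let t < t′ be two irrational real numbers. Then [t]_q < [t′]_q. In particular, the q-deformation map t ↦ [t]_q is injective on the irrationals. -/

import Mathlib

/-!
Write `[x]♯_q = β · ∞` and compare two such points through the determinant `colDet` of the first
columns of their matrices. For a positive expansion the first digit `x` pins `β · ∞` into
`([x]_q, [x+1]_q]`, and the second digit `c` pins the rest into a window cut out by `[c]_{q⁻¹}` and
`[c+1]_{q⁻¹}`. So at the first digit where two positive expansions differ their order is the same
for every `q > 0`, while common leading digits only multiply `colDet` by a positive determinant.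
At `q = 1` the matrices are the classical ones and `[x]♯₁ = x`, so rationals are ordered like their
deformations. Negative expansions reduce to positive ones by conjugating with `diag(1, -q)`, which
gives `[x]♯_q = -[-x]♯_{q⁻¹} / q`. Finally, rationals `t < r < s < t'` give
`[t]_q ≤ [r]♯_q < [s]♯_q ≤ [t']_q`.
-/

open Matrix Filter

/-- The q-deformed generator σ₁(q) = [[q⁻¹, −q⁻¹], [0, 1]]. -/
noncomputable def sig1 (q : ℝ) : Matrix (Fin 2) (Fin 2) ℝ := !![q⁻¹, -q⁻¹; 0, 1]

/-- The q-deformed generator σ₂(q) = [[1, 0], [1, q⁻¹]]. -/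
noncomputable def sig2 (q : ℝ) : Matrix (Fin 2) (Fin 2) ℝ := !![1, 0; 1, q⁻¹]

/-- `betaMat q a k` is the product of the first `k` alternating factors
`σ₁(q)^{-a 1} · σ₂(q)^{a 2} · σ₁(q)^{-a 3} ⋯` (indices start at 1). -/
noncomputable def betaMat (q : ℝ) (a : ℕ → ℤ) : ℕ → Matrix (Fin 2) (Fin 2) ℝ
  | 0 => 1
  | k + 1 => betaMat q a k *
      (if (k + 1) % 2 = 1 then sig1 q ^ (-(a (k + 1))) else sig2 q ^ (a (k + 1)))

/-- Möbius action of a 2×2 real matrix on a real number: z ↦ (Az + B)/(Cz + D). -/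
noncomputable def mobiusAct (M : Matrix (Fin 2) (Fin 2) ℝ) (z : ℝ) : ℝ :=
  (M 0 0 * z + M 0 1) / (M 1 0 * z + M 1 1)

/-- Möbius image of ∞ under a 2×2 real matrix: ∞ ↦ A/C. -/
noncomputable def mobiusInf (M : Matrix (Fin 2) (Fin 2) ℝ) : ℝ := M 0 0 / M 1 0

/-- `a` (on indices 1,…,2n) is an even continued form: either `a₁ ≥ 0` and `aᵢ ≥ 1` for
`2 ≤ i ≤ 2n`, or `a₁ ≤ 0` and `aᵢ ≤ −1` for `2 ≤ i ≤ 2n`. -/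
def IsEvenForm (n : ℕ) (a : ℕ → ℤ) : Prop :=
  1 ≤ n ∧ ((0 ≤ a 1 ∧ ∀ i, 2 ≤ i → i ≤ 2 * n → 1 ≤ a i)
    ∨ (a 1 ≤ 0 ∧ ∀ i, 2 ≤ i → i ≤ 2 * n → a i ≤ -1))

/-- Value of the continued fraction `a i + 1/(a (i+1) + 1/(⋯ + 1/(a last)))`. -/
def cfVal (a : ℕ → ℤ) (last i : ℕ) : ℚ :=
  if last ≤ i then (a i : ℚ)
  else (a i : ℚ) + 1 / cfVal a last (i + 1)
termination_by last - i
decreasing_by omega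

/-- `a` (on indices 1,…,2n) is the even continued fraction expansion of the rational `x`:
for `x ≠ 0` it is an even continued form of value `x`; by convention the expansion of `0`
is `(−1, 1)`. -/
def IsECFExp (n : ℕ) (a : ℕ → ℤ) (x : ℚ) : Prop :=
  (x ≠ 0 ∧ IsEvenForm n a ∧ cfVal a (2 * n) 1 = x) ∨
  (x = 0 ∧ n = 1 ∧ a 1 = -1 ∧ a 2 = 1)

/-- The right q-deformation attached to expansion data `(n, a)`:
the image of ∞ under the Möbius transformation of β(a, q). -/
noncomputable def sharpVal (q : ℝ) (n : ℕ) (a : ℕ → ℤ) : ℝ :=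
  mobiusInf (betaMat q a (2 * n))

/-- The left q-deformation attached to expansion data `(n, a)`:
the image of 1/(1−q) under the Möbius transformation of β(a, q). -/
noncomputable def flatVal (q : ℝ) (n : ℕ) (a : ℕ → ℤ) : ℝ :=
  mobiusAct (betaMat q a (2 * n)) (1 / (1 - q))

/-- `IsQIrrDef q t L` says that L is the q-deformation [t]_q of the (irrational) real t:
for every sequence of rationals xₘ → t (with expansion data), [xₘ]♯_q → L. -/
def IsQIrrDef (q t L : ℝ) : Prop :=
  ∀ (x : ℕ → ℚ) (n : ℕ → ℕ) (A : ℕ → ℕ → ℤ),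
    Tendsto (fun m => (x m : ℝ)) atTop (nhds t) →
    (∀ m, IsECFExp (n m) (A m) (x m)) →
    Tendsto (fun m => sharpVal q (n m) (A m)) atTop (nhds L)

section

open Finset

variable {q : ℝ}

local notation "Mat₂" => Matrix (Fin 2) (Fin 2) ℝ

/-- The q-integer `[k]_q`. -/
noncomputable def qNat (q : ℝ) (k : ℕ) : ℝ := ∑ j ∈ range k, q ^ j

@[simp] lemma qNat_zero : qNat q 0 = 0 := by simp [qNat]

lemma qNat_succ (k : ℕ) : qNat q (k + 1) = qNat q k + q ^ k := sum_range_succ _ _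

@[simp] lemma qNat_one_left (k : ℕ) : qNat 1 k = k := by simp [qNat]

lemma qNat_mono (hq : 0 < q) : Monotone (qNat q) := fun _ _ hkl =>
  sum_le_sum_of_subset_of_nonneg (range_subset_range.mpr hkl) fun _ _ _ => by positivity

lemma one_le_qNat (hq : 0 < q) {k : ℕ} (hk : 1 ≤ k) : 1 ≤ qNat q k := by
  simpa [qNat] using qNat_mono hq hk

lemma sig1_det : (sig1 q).det = q⁻¹ := by simp [sig1, det_fin_two_of]

lemma sig2_det : (sig2 q).det = q⁻¹ := by simp [sig2, det_fin_two_of]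

lemma sig1_zpow_neg_natCast (hq : q ≠ 0) (k : ℕ) :
    sig1 q ^ (-(k : ℤ)) = !![q ^ k, qNat q k; 0, 1] := by
  have hinv : (sig1 q)⁻¹ = !![q, 1; 0, 1] := by
    refine inv_eq_right_inv ?_
    simp [sig1, hq, ← one_fin_two]
  rw [zpow_neg_natCast, ← inv_pow', hinv]
  induction k with
  | zero => simp [one_fin_two]
  | succ k ih => rw [pow_succ, ih, mul_fin_two, qNat_succ]; simp [pow_succ]; ring

lemma sig2_zpow_natCast (k : ℕ) : sig2 q ^ (k : ℤ) = !![1, 0; qNat q⁻¹ k, q⁻¹ ^ k] := by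
  rw [zpow_natCast]
  induction k with
  | zero => simp [one_fin_two]
  | succ k ih => rw [pow_succ, ih, sig2, mul_fin_two, qNat_succ]; simp [pow_succ]

lemma det_sig1_zpow_neg_natCast (hq : q ≠ 0) (x : ℕ) : (sig1 q ^ (-(x : ℤ))).det = q ^ x := by
  rw [sig1_zpow_neg_natCast hq, det_fin_two_of]
  ring

lemma det_sig2_zpow_natCast (c : ℕ) : (sig2 q ^ (c : ℤ)).det = q⁻¹ ^ c := by
  rw [sig2_zpow_natCast, det_fin_two_of]
  ring

lemma sig1_zpow_neg_mul_apply (hq : q ≠ 0) (x : ℕ) (V : Mat₂) :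
    (sig1 q ^ (-(x : ℤ)) * V) 0 0 = q ^ x * V 0 0 + qNat q x * V 1 0 ∧
      (sig1 q ^ (-(x : ℤ)) * V) 1 0 = V 1 0 := by
  rw [sig1_zpow_neg_natCast hq]
  simp [mul_apply, Fin.sum_univ_two]

lemma sig2_zpow_mul_apply (c : ℕ) (N : Mat₂) :
    (sig2 q ^ (c : ℤ) * N) 0 0 = N 0 0 ∧
      (sig2 q ^ (c : ℤ) * N) 1 0 = qNat q⁻¹ c * N 0 0 + q⁻¹ ^ c * N 1 0 := by
  rw [sig2_zpow_natCast]
  simp [mul_apply, Fin.sum_univ_two]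

lemma betaMat_two_mul_succ_right (a : ℕ → ℤ) (k : ℕ) :
    betaMat q a (2 * (k + 1)) =
      betaMat q a (2 * k) * (sig1 q ^ (-a (2 * k + 1)) * sig2 q ^ a (2 * k + 2)) := by
  have h1 : (2 * k + 1) % 2 = 1 := by omega
  have h2 : (2 * k + 1 + 1) % 2 ≠ 1 := by omega
  rw [show 2 * (k + 1) = 2 * k + 1 + 1 by ring, betaMat, betaMat, if_pos h1, if_neg h2, mul_assoc]

lemma betaMat_two_mul_succ (a : ℕ → ℤ) (n : ℕ) :
    betaMat q a (2 * (n + 1)) =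
      sig1 q ^ (-a 1) * sig2 q ^ a 2 * betaMat q (fun i => a (i + 2)) (2 * n) := by
  induction n with
  | zero => simp [betaMat]
  | succ n ih =>
    rw [betaMat_two_mul_succ_right, ih, betaMat_two_mul_succ_right _ n, mul_assoc, mul_assoc,
      mul_assoc]
    rfl

lemma semiconjBy_zpow_neg {n R : Type*} [Fintype n] [DecidableEq n] [CommRing R]
    {D X Y : Matrix n n R} (hX : IsUnit X.det) (hY : IsUnit Y.det) (h : SemiconjBy D X⁻¹ Y)
    (m : ℤ) : SemiconjBy D (X ^ (-m)) (Y ^ m) := by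
  rw [← inv_zpow' hX]
  exact Matrix.SemiconjBy.zpow_right (isUnit_nonsing_inv_det X hX) hY h m

/-- Conjugation by `diag(1, -q)` turns `σᵢ(q⁻¹)⁻¹` into `σᵢ(q)`. -/
lemma betaMat_mirror (hq : q ≠ 0) (a : ℕ → ℤ) (k : ℕ) :
    SemiconjBy !![1, 0; 0, -q] (betaMat q⁻¹ (-a) k) (betaMat q a k) := by
  have hu1 (p : ℝ) (hp : p ≠ 0) : IsUnit (sig1 p).det := by simpa [sig1_det] using hp
  have hu2 (p : ℝ) (hp : p ≠ 0) : IsUnit (sig2 p).det := by simpa [sig2_det] using hp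
  have h1 : ∀ m : ℤ, SemiconjBy !![1, 0; 0, -q] (sig1 q⁻¹ ^ (-m)) (sig1 q ^ m) := by
    refine semiconjBy_zpow_neg (hu1 _ (inv_ne_zero hq)) (hu1 q hq) ?_
    rw [SemiconjBy, inv_eq_right_inv (B := !![q⁻¹, 1; 0, 1])]
    · simp [sig1, hq]
    · simp [sig1, hq, one_fin_two]
  have h2 : ∀ m : ℤ, SemiconjBy !![1, 0; 0, -q] (sig2 q⁻¹ ^ (-m)) (sig2 q ^ m) := by
    refine semiconjBy_zpow_neg (hu2 _ (inv_ne_zero hq)) (hu2 q hq) ?_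
    rw [SemiconjBy, inv_eq_right_inv (B := !![1, 0; -q⁻¹, q⁻¹])]
    · simp [sig2, hq]
    · simp [sig2, hq, one_fin_two]
  induction k with
  | zero => exact SemiconjBy.one_right _
  | succ k ih =>
    refine ih.mul_right ?_
    split_ifs
    · simpa using h1 (-a (k + 1))
    · simpa using h2 (a (k + 1))

lemma sharpVal_eq_neg_sharpVal_inv (hq : q ≠ 0) (n : ℕ) (a : ℕ → ℤ) :
    sharpVal q n a = -sharpVal q⁻¹ n (-a) / q := by
  have h := betaMat_mirror hq a (2 * n)
  have h0 := congrFun (congrFun h 0) 0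
  have h1 := congrFun (congrFun h 1) 0
  simp [mul_apply, Fin.sum_univ_two] at h0 h1
  rw [sharpVal, sharpVal, mobiusInf, mobiusInf, ← h0, ← h1]
  ring

/-- The determinant of the first columns of `M` and `N`: when `M 1 0` and `N 1 0` are positive,
its sign compares `M · ∞` with `N · ∞`, and unlike that comparison it makes sense at `∞`. -/
def colDet (M N : Mat₂) : ℝ := M 0 0 * N 1 0 - M 1 0 * N 0 0

lemma colDet_mul_mul (A M N : Mat₂) : colDet (A * M) (A * N) = A.det * colDet M N := by
  simp only [colDet, mul_apply, Fin.sum_univ_two, det_fin_two]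
  ring

lemma colDet_swap (M N : Mat₂) : colDet N M = -colDet M N := by
  unfold colDet
  ring

lemma mobiusInf_lt_mobiusInf_iff {M N : Mat₂} (hM : 0 < M 1 0) (hN : 0 < N 1 0) :
    mobiusInf M < mobiusInf N ↔ colDet M N < 0 := by
  rw [mobiusInf, mobiusInf, div_lt_div_iff₀ hM hN, colDet, sub_neg, mul_comm (N 0 0)]

/-- `N · ∞` lies in `(1, ∞]`. -/
def AboveOne (N : Mat₂) : Prop := 0 ≤ N 1 0 ∧ N 1 0 < N 0 0

/-- `V · ∞` lies in `(0, 1]`. -/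
def UnitBounded (V : Mat₂) : Prop := 0 < V 0 0 ∧ V 0 0 ≤ V 1 0

lemma sig2_zpow_mul_bounds (hq : 0 < q) (c : ℕ) {N : Mat₂} (hN : AboveOne N) :
    0 < (sig2 q ^ (c : ℤ) * N) 0 0 ∧
      qNat q⁻¹ c * (sig2 q ^ (c : ℤ) * N) 0 0 ≤ (sig2 q ^ (c : ℤ) * N) 1 0 ∧
      (sig2 q ^ (c : ℤ) * N) 1 0 < qNat q⁻¹ (c + 1) * (sig2 q ^ (c : ℤ) * N) 0 0 := by
  obtain ⟨h0, h1⟩ := sig2_zpow_mul_apply (q := q) c N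
  have hpow : 0 < q⁻¹ ^ c := by positivity
  rw [h0, h1, qNat_succ]
  exact ⟨by linarith [hN.1, hN.2], by nlinarith [hN.1], by nlinarith [hN.2]⟩

lemma unitBounded_sig2_zpow_mul (hq : 0 < q) {c : ℕ} (hc : 1 ≤ c) {N : Mat₂}
    (hN : AboveOne N) : UnitBounded (sig2 q ^ (c : ℤ) * N) := by
  obtain ⟨h0, h1, -⟩ := sig2_zpow_mul_bounds hq c hN
  exact ⟨h0, by nlinarith [one_le_qNat (inv_pos.mpr hq) hc]⟩

lemma sig1_zpow_neg_mul_bounds (hq : 0 < q) (x : ℕ) {V : Mat₂} (hV : UnitBounded V) :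
    0 < (sig1 q ^ (-(x : ℤ)) * V) 1 0 ∧
      qNat q x * (sig1 q ^ (-(x : ℤ)) * V) 1 0 < (sig1 q ^ (-(x : ℤ)) * V) 0 0 ∧
      (sig1 q ^ (-(x : ℤ)) * V) 0 0 ≤ qNat q (x + 1) * (sig1 q ^ (-(x : ℤ)) * V) 1 0 := by
  obtain ⟨h0, h1⟩ := sig1_zpow_neg_mul_apply hq.ne' x V
  have hpow : 0 < q ^ x := by positivity
  rw [h0, h1, qNat_succ]
  exact ⟨by linarith [hV.1, hV.2], by nlinarith [hV.1], by nlinarith [hV.2]⟩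

lemma colDet_sig2_zpow_mul_pos_of_lt (hq : 0 < q) {c d : ℕ} (hcd : c < d) {N N' : Mat₂}
    (hN : AboveOne N) (hN' : AboveOne N') :
    0 < colDet (sig2 q ^ (c : ℤ) * N) (sig2 q ^ (d : ℤ) * N') := by
  obtain ⟨h0, -, h2⟩ := sig2_zpow_mul_bounds hq c hN
  obtain ⟨h0', h1', -⟩ := sig2_zpow_mul_bounds hq d hN'
  have hmono := qNat_mono (inv_pos.mpr hq) (Nat.succ_le_of_lt hcd)
  unfold colDet
  nlinarith [mul_le_mul_of_nonneg_left h1' h0.le, mul_lt_mul_of_pos_right h2 h0',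
    mul_le_mul_of_nonneg_right hmono (mul_pos h0 h0').le]

lemma colDet_sig1_zpow_neg_mul_neg_of_lt (hq : 0 < q) {x y : ℕ} (hxy : x < y) {V V' : Mat₂}
    (hV : UnitBounded V) (hV' : UnitBounded V') :
    colDet (sig1 q ^ (-(x : ℤ)) * V) (sig1 q ^ (-(y : ℤ)) * V') < 0 := by
  obtain ⟨h0, -, h2⟩ := sig1_zpow_neg_mul_bounds hq x hV
  obtain ⟨h0', h1', -⟩ := sig1_zpow_neg_mul_bounds hq y hV'
  have hmono := qNat_mono hq (Nat.succ_le_of_lt hxy)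
  unfold colDet
  nlinarith [mul_le_mul_of_nonneg_right h2 h0'.le, mul_lt_mul_of_pos_left h1' h0,
    mul_le_mul_of_nonneg_right hmono (mul_pos h0 h0').le]

lemma colDet_sig2_zpow_mul_neg (hq : 0 < q) (c d : ℕ) {N₁ N₁' N N' : Mat₂}
    (h₁ : AboveOne N₁) (h₁' : AboveOne N₁') (h : AboveOne N) (h' : AboveOne N')
    (htail : colDet N₁ N₁' < 0 → colDet N N' < 0)
    (hone : colDet (sig2 1 ^ (c : ℤ) * N₁) (sig2 1 ^ (d : ℤ) * N₁') < 0) :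
    colDet (sig2 q ^ (c : ℤ) * N) (sig2 q ^ (d : ℤ) * N') < 0 := by
  rcases lt_trichotomy c d with hcd | rfl | hcd
  · exact absurd hone (colDet_sig2_zpow_mul_pos_of_lt one_pos hcd h₁ h₁').not_gt
  · rw [colDet_mul_mul, det_sig2_zpow_natCast] at hone ⊢
    exact mul_neg_of_pos_of_neg (by positivity) (htail (by simpa using hone))
  · rw [colDet_swap]
    exact neg_neg_of_pos (colDet_sig2_zpow_mul_pos_of_lt hq hcd h' h)

lemma colDet_sig1_zpow_neg_mul_neg (hq : 0 < q) (x y : ℕ) {V₁ V₁' V V' : Mat₂}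
    (h₁ : UnitBounded V₁) (h₁' : UnitBounded V₁') (h : UnitBounded V) (h' : UnitBounded V')
    (htail : colDet V₁ V₁' < 0 → colDet V V' < 0)
    (hone : colDet (sig1 1 ^ (-(x : ℤ)) * V₁) (sig1 1 ^ (-(y : ℤ)) * V₁') < 0) :
    colDet (sig1 q ^ (-(x : ℤ)) * V) (sig1 q ^ (-(y : ℤ)) * V') < 0 := by
  rcases lt_trichotomy x y with hxy | rfl | hxy
  · exact colDet_sig1_zpow_neg_mul_neg_of_lt hq hxy h h'
  · rw [colDet_mul_mul, det_sig1_zpow_neg_natCast one_ne_zero] at hone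
    rw [colDet_mul_mul, det_sig1_zpow_neg_natCast hq.ne']
    exact mul_neg_of_pos_of_neg (by positivity) (htail (by simpa using hone))
  · rw [colDet_swap] at hone
    exact absurd (colDet_sig1_zpow_neg_mul_neg_of_lt one_pos hxy h₁' h₁) (by linarith)

/-- Digits of a positive even continued fraction; `n = 0` is the empty expansion, whose matrix `1`
sends `∞` to `∞`. -/
def IsPosForm (n : ℕ) (a : ℕ → ℤ) : Prop :=
  (0 < n → 0 ≤ a 1) ∧ ∀ i, 2 ≤ i → i ≤ 2 * n → 1 ≤ a i

lemma IsPosForm.succ {n : ℕ} {a : ℕ → ℤ} (ha : IsPosForm (n + 1) a) :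
    ∃ x c : ℕ, a 1 = x ∧ a 2 = c ∧ 1 ≤ c ∧ ∀ i, 1 ≤ i → i ≤ 2 * n → 1 ≤ a (i + 2) := by
  obtain ⟨x, hx⟩ := Int.eq_ofNat_of_zero_le (ha.1 n.succ_pos)
  have ha2 := ha.2 2 le_rfl (by omega)
  obtain ⟨c, hc⟩ := Int.eq_ofNat_of_zero_le (by omega : 0 ≤ a 2)
  exact ⟨x, c, hx, hc, by omega, fun i hi hin => ha.2 (i + 2) (by omega) (by omega)⟩

lemma isPosForm_of_one_le {n : ℕ} {a : ℕ → ℤ} (ha : ∀ i, 1 ≤ i → i ≤ 2 * n → 1 ≤ a i) :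
    IsPosForm n a :=
  ⟨fun hn => by linarith [ha 1 le_rfl (by omega)], fun i hi hin => ha i (by omega) hin⟩

lemma aboveOne_betaMat (hq : 0 < q) {n : ℕ} {a : ℕ → ℤ}
    (ha : ∀ i, 1 ≤ i → i ≤ 2 * n → 1 ≤ a i) : AboveOne (betaMat q a (2 * n)) := by
  induction n generalizing a with
  | zero => simp [AboveOne, betaMat]
  | succ n ih =>
    obtain ⟨x, c, hx, hc, hc1, htail⟩ := (isPosForm_of_one_le ha).succ
    have hx1 : 1 ≤ x := by have := ha 1 le_rfl (by omega); omega
    rw [betaMat_two_mul_succ, hx, hc, mul_assoc]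
    obtain ⟨h0, h1, -⟩ :=
      sig1_zpow_neg_mul_bounds hq x (unitBounded_sig2_zpow_mul hq hc1 (ih htail))
    exact ⟨h0.le, by nlinarith [one_le_qNat hq hx1]⟩

lemma betaMat_pos (hq : 0 < q) {n : ℕ} {a : ℕ → ℤ} (ha : IsPosForm (n + 1) a) :
    0 < betaMat q a (2 * (n + 1)) 1 0 ∧ 0 < betaMat q a (2 * (n + 1)) 0 0 := by
  obtain ⟨x, c, hx, hc, hc1, htail⟩ := ha.succ
  rw [betaMat_two_mul_succ, hx, hc, mul_assoc]
  obtain ⟨h0, h1, -⟩ :=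
    sig1_zpow_neg_mul_bounds hq x (unitBounded_sig2_zpow_mul hq hc1 (aboveOne_betaMat hq htail))
  exact ⟨h0, by nlinarith [qNat_mono hq x.zero_le, qNat_zero (q := q)]⟩

theorem colDet_betaMat_neg_of_one (hq : 0 < q) {n m : ℕ} {a b : ℕ → ℤ} (ha : IsPosForm n a)
    (hb : IsPosForm m b) (hone : colDet (betaMat 1 a (2 * n)) (betaMat 1 b (2 * m)) < 0) :
    colDet (betaMat q a (2 * n)) (betaMat q b (2 * m)) < 0 := by
  induction n generalizing m a b with
  | zero =>
    cases m with
    | zero => simp [colDet, betaMat] at hone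
    | succ m =>
      have := (betaMat_pos one_pos hb).1
      simp [colDet, betaMat] at hone
      linarith
  | succ n ih =>
    cases m with
    | zero => simpa [colDet, betaMat] using (betaMat_pos hq ha).1
    | succ m =>
      obtain ⟨x, c, hx, hc, hc1, ha'⟩ := ha.succ
      obtain ⟨y, d, hy, hd, hd1, hb'⟩ := hb.succ
      rw [betaMat_two_mul_succ, betaMat_two_mul_succ, hx, hc, hy, hd, mul_assoc, mul_assoc]
        at hone ⊢
      refine colDet_sig1_zpow_neg_mul_neg hq x y
        (unitBounded_sig2_zpow_mul one_pos hc1 (aboveOne_betaMat one_pos ha'))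
        (unitBounded_sig2_zpow_mul one_pos hd1 (aboveOne_betaMat one_pos hb'))
        (unitBounded_sig2_zpow_mul hq hc1 (aboveOne_betaMat hq ha'))
        (unitBounded_sig2_zpow_mul hq hd1 (aboveOne_betaMat hq hb')) ?_ hone
      exact colDet_sig2_zpow_mul_neg hq c d (aboveOne_betaMat one_pos ha')
        (aboveOne_betaMat one_pos hb') (aboveOne_betaMat hq ha') (aboveOne_betaMat hq hb')
        (ih (isPosForm_of_one_le ha') (isPosForm_of_one_le hb'))

theorem sharpVal_lt_of_sharpVal_one_lt (hq : 0 < q) {n m : ℕ} {a b : ℕ → ℤ}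
    (ha : IsPosForm (n + 1) a) (hb : IsPosForm (m + 1) b)
    (h : sharpVal 1 (n + 1) a < sharpVal 1 (m + 1) b) :
    sharpVal q (n + 1) a < sharpVal q (m + 1) b := by
  rw [sharpVal, sharpVal,
    mobiusInf_lt_mobiusInf_iff (betaMat_pos one_pos ha).1 (betaMat_pos one_pos hb).1] at h
  rw [sharpVal, sharpVal, mobiusInf_lt_mobiusInf_iff (betaMat_pos hq ha).1 (betaMat_pos hq hb).1]
  exact colDet_betaMat_neg_of_one hq ha hb h

lemma sharpVal_pos (hq : 0 < q) {n : ℕ} {a : ℕ → ℤ} (ha : IsPosForm (n + 1) a) :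
    0 < sharpVal q (n + 1) a :=
  div_pos (betaMat_pos hq ha).2 (betaMat_pos hq ha).1

lemma cfVal_of_le {a : ℕ → ℤ} {last i : ℕ} (h : last ≤ i) : cfVal a last i = a i := by
  rw [cfVal, if_pos h]

lemma cfVal_of_lt {a : ℕ → ℤ} {last i : ℕ} (h : i < last) :
    cfVal a last i = a i + 1 / cfVal a last (i + 1) := by
  rw [cfVal, if_neg (by omega)]

lemma cfVal_neg (a : ℕ → ℤ) (last i : ℕ) : cfVal (-a) last i = -cfVal a last i := by
  induction i using cfVal.induct last with
  | case1 i h => simp [cfVal_of_le h]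
  | case2 i h ih =>
    rw [cfVal_of_lt (a := -a) (not_le.mp h), cfVal_of_lt (a := a) (not_le.mp h), ih]
    push_cast [Pi.neg_apply]
    ring

lemma cfVal_shift {a b : ℕ → ℤ} {last i : ℕ} (hab : ∀ j, i ≤ j → b j = a (j + 2)) :
    cfVal b last i = cfVal a (last + 2) (i + 2) := by
  induction i using cfVal.induct last with
  | case1 i h => rw [cfVal_of_le h, cfVal_of_le (by omega), hab i le_rfl]
  | case2 i h ih =>
    rw [cfVal_of_lt (a := b) (not_le.mp h), cfVal_of_lt (a := a) (by omega), hab i le_rfl,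
      ih fun j hj => hab j (by omega)]

lemma cfVal_two (a : ℕ → ℤ) : cfVal a 2 1 = a 1 + 1 / a 2 := by
  rw [cfVal_of_lt (by norm_num), cfVal_of_le le_rfl]

lemma cfVal_two_mul_succ {a b : ℕ → ℤ} (hab : ∀ j, 1 ≤ j → b j = a (j + 2)) {n : ℕ}
    (hn : 0 < n) : cfVal a (2 * (n + 1)) 1 = a 1 + 1 / (a 2 + 1 / cfVal b (2 * n) 1) := by
  rw [cfVal_of_lt (by omega), cfVal_of_lt (a := a) (by omega), cfVal_shift hab]
  rfl

lemma mobiusInf_sig1_sig2_one (x c : ℕ) (N : Mat₂) :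
    mobiusInf (sig1 1 ^ (-(x : ℤ)) * (sig2 1 ^ (c : ℤ) * N)) =
      (N 0 0 + x * (c * N 0 0 + N 1 0)) / (c * N 0 0 + N 1 0) := by
  obtain ⟨h0, h1⟩ := sig1_zpow_neg_mul_apply one_ne_zero x (sig2 1 ^ (c : ℤ) * N)
  obtain ⟨h0', h1'⟩ := sig2_zpow_mul_apply (q := 1) c N
  rw [mobiusInf, h0, h1, h0', h1']
  simp

lemma cfVal_eq_sharpVal_one {n : ℕ} {a : ℕ → ℤ} (ha : IsPosForm (n + 1) a) :
    (cfVal a (2 * (n + 1)) 1 : ℝ) = sharpVal 1 (n + 1) a := by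
  induction n generalizing a with
  | zero =>
    obtain ⟨x, c, hx, hc, hc1, -⟩ := ha.succ
    have hc0 : (c : ℝ) ≠ 0 := by positivity
    rw [cfVal_two, sharpVal, betaMat_two_mul_succ, hx, hc, mul_assoc, mobiusInf_sig1_sig2_one]
    simp [betaMat]
    field_simp
    ring
  | succ n ih =>
    obtain ⟨x, c, hx, hc, hc1, ha'⟩ := ha.succ
    obtain ⟨hN1, hN0⟩ := betaMat_pos one_pos (isPosForm_of_one_le ha')
    rw [cfVal_two_mul_succ (fun j _ => rfl) n.succ_pos, sharpVal, betaMat_two_mul_succ, hx, hc,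
      mul_assoc, mobiusInf_sig1_sig2_one]
    push_cast
    rw [ih (isPosForm_of_one_le ha'), sharpVal, mobiusInf]
    field_simp
    ring

def consPair (x c : ℤ) (a : ℕ → ℤ) : ℕ → ℤ := fun i =>
  if i = 1 then x else if i = 2 then c else a (i - 2)

lemma isPosForm_consPair {x c : ℤ} {n : ℕ} {a : ℕ → ℤ} (hx : 0 ≤ x) (hc : 1 ≤ c)
    (ha : ∀ i, 1 ≤ i → i ≤ 2 * n → 1 ≤ a i) : IsPosForm (n + 1) (consPair x c a) := by
  refine ⟨fun _ => by simpa [consPair] using hx, fun i hi hin => ?_⟩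
  rcases eq_or_lt_of_le hi with rfl | hi
  · simpa [consPair] using hc
  · simpa [consPair, show i ≠ 1 by omega, show i ≠ 2 by omega]
      using ha (i - 2) (by omega) (by omega)

lemma cfVal_consPair_two (x c : ℤ) (a : ℕ → ℤ) : cfVal (consPair x c a) 2 1 = x + 1 / c := by
  simp [cfVal_two, consPair]

lemma cfVal_consPair {x c : ℤ} {n : ℕ} {a : ℕ → ℤ} (hn : 0 < n) :
    cfVal (consPair x c a) (2 * (n + 1)) 1 = x + 1 / (c + 1 / cfVal a (2 * n) 1) := by
  rw [cfVal_two_mul_succ (b := a) (fun j hj => by simp [consPair]; omega) hn]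
  simp [consPair]

/-- Induction on the numerator of the fractional part, which drops under `x ↦ (fract x)⁻¹`. -/
theorem exists_isPosForm_cfVal_eq (x : ℚ) (hx : 0 < x) :
    ∃ n a, IsPosForm (n + 1) a ∧ (1 < x → 1 ≤ a 1) ∧ cfVal a (2 * (n + 1)) 1 = x := by
  induction hμ : (Int.fract x).num.toNat using Nat.strong_induction_on generalizing x with
  | _ μ ih =>
  have hx0 : 0 ≤ ⌊x⌋ := Int.floor_nonneg.mpr hx.le
  have hx1 : 1 < x → 1 ≤ ⌊x⌋ := fun h => Int.le_floor.mpr (by exact_mod_cast h.le)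
  have hxsplit := Int.floor_add_fract x
  rcases (Int.fract_nonneg x).eq_or_lt with hf | hf
  · rw [← hf, add_zero] at hxsplit
    have hk : 1 ≤ ⌊x⌋ := by rw [← hxsplit] at hx; exact_mod_cast hx
    refine ⟨0, consPair (⌊x⌋ - 1) 1 0, isPosForm_consPair (by omega) le_rfl (by omega), ?_, ?_⟩
    · intro h
      have h2 : (1 : ℚ) < ⌊x⌋ := hxsplit ▸ h
      simp [consPair]
      exact_mod_cast h2
    · rw [cfVal_consPair_two]
      push_cast
      linarith
  set y := (Int.fract x)⁻¹ with hy
  have hy1 : 1 < y := one_lt_inv₀ hf |>.mpr (Int.fract_lt_one x)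
  have hy0 : 1 ≤ ⌊y⌋ := Int.le_floor.mpr (by exact_mod_cast hy1.le)
  have hysplit := Int.floor_add_fract y
  have hxy : x = ⌊x⌋ + 1 / y := by rw [hy, one_div, inv_inv, hxsplit]
  rcases (Int.fract_nonneg y).eq_or_lt with hg | hg
  · rw [← hg, add_zero] at hysplit
    refine ⟨0, consPair ⌊x⌋ ⌊y⌋ 0, isPosForm_consPair hx0 hy0 (by omega), by simpa [consPair],
      ?_⟩
    rw [cfVal_consPair_two, hysplit, hxy.symm]
  set z := (Int.fract y)⁻¹ with hz
  have hz1 : 1 < z := one_lt_inv₀ hg |>.mpr (Int.fract_lt_one y)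
  have hμz : (Int.fract z).num.toNat < μ := by
    have h1 := hz ▸ Rat.fract_inv_num_lt_num_of_pos hg
    have h2 := hy ▸ Rat.fract_inv_num_lt_num_of_pos hf
    have h3 := Rat.num_nonneg.mpr (Int.fract_nonneg z)
    omega
  obtain ⟨n, a, ha, ha1, hcf⟩ := ih _ hμz z (by linarith) rfl
  refine ⟨n + 1, consPair ⌊x⌋ ⌊y⌋ a, isPosForm_consPair hx0 hy0 fun i hi hin => ?_,
    by simpa [consPair], ?_⟩
  · rcases eq_or_lt_of_le hi with rfl | hi
    · exact ha1 hz1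
    · exact ha.2 i hi hin
  · rw [cfVal_consPair n.succ_pos, hcf, hz, one_div (Int.fract y)⁻¹, inv_inv, hysplit, hxy.symm]

lemma exists_isECFExp (x : ℚ) : ∃ n a, IsECFExp n a x := by
  rcases lt_trichotomy x 0 with hx | rfl | hx
  · obtain ⟨n, a, ha, -, hcf⟩ := exists_isPosForm_cfVal_eq (-x) (neg_pos.mpr hx)
    refine ⟨n + 1, -a, Or.inl ⟨hx.ne, ⟨n.succ_pos, Or.inr ⟨?_, fun i hi hin => ?_⟩⟩, ?_⟩⟩
    · simpa using ha.1 n.succ_pos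
    · simpa using ha.2 i hi hin
    · rw [cfVal_neg, hcf, neg_neg]
  · exact ⟨1, consPair (-1) 1 0, Or.inr ⟨rfl, rfl, rfl, rfl⟩⟩
  · obtain ⟨n, a, ha, -, hcf⟩ := exists_isPosForm_cfVal_eq x hx
    exact ⟨n + 1, a, Or.inl ⟨hx.ne', ⟨n.succ_pos, Or.inl ⟨ha.1 n.succ_pos, ha.2⟩⟩, hcf⟩⟩

lemma IsEvenForm.isPosForm {n : ℕ} {a : ℕ → ℤ} (h : IsEvenForm n a) :
    ∃ k, n = k + 1 ∧ (IsPosForm (k + 1) a ∨ IsPosForm (k + 1) (-a)) := by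
  obtain ⟨hn, ⟨h1, h2⟩ | ⟨h1, h2⟩⟩ := h
  · exact ⟨n - 1, by omega, Or.inl ⟨fun _ => h1, by rwa [Nat.sub_add_cancel hn]⟩⟩
  · refine ⟨n - 1, by omega, Or.inr ⟨fun _ => by simpa using h1, fun i hi hin => ?_⟩⟩
    have := h2 i hi (by omega)
    simp only [Pi.neg_apply]
    omega

lemma sharpVal_neg_of_isPosForm_neg (hq : 0 < q) {n : ℕ} {a : ℕ → ℤ}
    (ha : IsPosForm (n + 1) (-a)) : sharpVal q (n + 1) a < 0 := by
  rw [sharpVal_eq_neg_sharpVal_inv hq.ne']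
  exact div_neg_of_neg_of_pos (neg_neg_of_pos (sharpVal_pos (inv_pos.mpr hq) ha)) hq

lemma sharpVal_eq_zero_of_digits {a : ℕ → ℤ} (h1 : a 1 = -1) (h2 : a 2 = 1) :
    sharpVal q 1 a = 0 := by
  rw [sharpVal, betaMat_two_mul_succ (n := 0), h1, h2]
  simp [mobiusInf, sig1, sig2, betaMat, mul_apply, Fin.sum_univ_two]

lemma IsECFExp.sharpVal_one {n : ℕ} {a : ℕ → ℤ} {x : ℚ} (h : IsECFExp n a x) :
    sharpVal 1 n a = x := by
  rcases h with ⟨-, hform, hcf⟩ | ⟨rfl, rfl, h1, h2⟩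
  · obtain ⟨k, rfl, ha | ha⟩ := hform.isPosForm
    · rw [← cfVal_eq_sharpVal_one ha, hcf]
    · rw [sharpVal_eq_neg_sharpVal_inv one_ne_zero, inv_one, ← cfVal_eq_sharpVal_one ha,
        cfVal_neg, hcf]
      push_cast
      ring
  · simp [sharpVal_eq_zero_of_digits h1 h2]

lemma IsECFExp.eq_zero_or_isPosForm {n : ℕ} {a : ℕ → ℤ} {x : ℚ} (h : IsECFExp n a x) :
    (∀ q, sharpVal q n a = 0) ∨ (∃ k, n = k + 1 ∧ IsPosForm (k + 1) a) ∨
      (∃ k, n = k + 1 ∧ IsPosForm (k + 1) (-a)) := by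
  rcases h with ⟨-, hform, -⟩ | ⟨-, rfl, h1, h2⟩
  · obtain ⟨k, rfl, ha | ha⟩ := hform.isPosForm
    exacts [Or.inr (Or.inl ⟨k, rfl, ha⟩), Or.inr (Or.inr ⟨k, rfl, ha⟩)]
  · exact Or.inl fun q => sharpVal_eq_zero_of_digits h1 h2

theorem sharpVal_lt_sharpVal (hq : 0 < q) {n m : ℕ} {a b : ℕ → ℤ} {x y : ℚ}
    (ha : IsECFExp n a x) (hb : IsECFExp m b y) (hxy : x < y) :
    sharpVal q n a < sharpVal q m b := by
  have hone : sharpVal 1 n a < sharpVal 1 m b := by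
    rw [ha.sharpVal_one, hb.sharpVal_one]
    exact_mod_cast hxy
  rcases ha.eq_zero_or_isPosForm with ha0 | ⟨k, rfl, ha'⟩ | ⟨k, rfl, ha'⟩ <;>
    rcases hb.eq_zero_or_isPosForm with hb0 | ⟨l, rfl, hb'⟩ | ⟨l, rfl, hb'⟩
  · linarith [ha0 1, hb0 1]
  · exact ha0 q ▸ sharpVal_pos hq hb'
  · linarith [ha0 1, sharpVal_neg_of_isPosForm_neg one_pos hb']
  · linarith [sharpVal_pos one_pos ha', hb0 1]
  · exact sharpVal_lt_of_sharpVal_one_lt hq ha' hb' hone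
  · linarith [sharpVal_pos one_pos ha', sharpVal_neg_of_isPosForm_neg one_pos hb']
  · exact hb0 q ▸ sharpVal_neg_of_isPosForm_neg hq ha'
  · exact (sharpVal_neg_of_isPosForm_neg hq ha').trans (sharpVal_pos hq hb')
  · rw [sharpVal_eq_neg_sharpVal_inv one_ne_zero, sharpVal_eq_neg_sharpVal_inv one_ne_zero,
      inv_one] at hone
    rw [sharpVal_eq_neg_sharpVal_inv hq.ne', sharpVal_eq_neg_sharpVal_inv hq.ne']
    have := sharpVal_lt_of_sharpVal_one_lt (inv_pos.mpr hq) hb' ha' (by linarith)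
    exact div_lt_div_of_pos_right (neg_lt_neg this) hq

lemma exists_seq_isECFExp_tendsto (t : ℝ) :
    ∃ (x : ℕ → ℚ) (n : ℕ → ℕ) (A : ℕ → ℕ → ℤ),
      Tendsto (fun m => (x m : ℝ)) atTop (nhds t) ∧ ∀ m, IsECFExp (n m) (A m) (x m) := by
  obtain ⟨x, -, -, hx⟩ := Rat.denseRange_cast.exists_seq_strictMono_tendsto Rat.cast_mono t
  choose n A hA using fun m => exists_isECFExp (x m)
  exact ⟨x, n, A, hx, hA⟩

lemma IsQIrrDef.le_sharpVal (hq : 0 < q) {t L : ℝ} (hL : IsQIrrDef q t L) {r : ℚ} (htr : t < r)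
    {n : ℕ} {a : ℕ → ℤ} (hr : IsECFExp n a r) : L ≤ sharpVal q n a := by
  obtain ⟨x, nx, A, hx, hA⟩ := exists_seq_isECFExp_tendsto t
  refine le_of_tendsto (hL x nx A hx hA) ?_
  filter_upwards [hx.eventually_lt_const htr] with m hm
  exact (sharpVal_lt_sharpVal hq (hA m) hr (by exact_mod_cast hm)).le

lemma IsQIrrDef.sharpVal_le (hq : 0 < q) {t L : ℝ} (hL : IsQIrrDef q t L) {r : ℚ} (hrt : r < t)
    {n : ℕ} {a : ℕ → ℤ} (hr : IsECFExp n a r) : sharpVal q n a ≤ L := by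
  obtain ⟨x, nx, A, hx, hA⟩ := exists_seq_isECFExp_tendsto t
  refine ge_of_tendsto (hL x nx A hx hA) ?_
  filter_upwards [hx.eventually_const_lt hrt] with m hm
  exact (sharpVal_lt_sharpVal hq hr (hA m) (by exact_mod_cast hm)).le

end

theorem qdeform_irrational_strictMono_general (q : ℝ) (hq0 : 0 < q)
    (t t' L L' : ℝ) (htt : t < t')
    (hL : IsQIrrDef q t L) (hL' : IsQIrrDef q t' L') :
    L < L' := by
  obtain ⟨r, htr, hrt'⟩ := exists_rat_btwn htt
  obtain ⟨s, hrs, hst'⟩ := exists_rat_btwn hrt'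
  obtain ⟨n, a, ha⟩ := exists_isECFExp r
  obtain ⟨m, b, hb⟩ := exists_isECFExp s
  calc L ≤ sharpVal q n a := hL.le_sharpVal hq0 htr ha
    _ < sharpVal q m b := sharpVal_lt_sharpVal hq0 ha hb (by exact_mod_cast hrs)
    _ ≤ L' := hL'.sharpVal_le hq0 hst' hb

/-- strict monotonicity of q-deformed irrationals: for 0 < q < 1 and
irrational reals t < t′ with q-deformations L = [t]_q, L′ = [t′]_q, one has L < L′;
in particular t ↦ [t]_q is injective on irrationals. -/
theorem qdeform_irrational_strictMono (q : ℝ) (hq0 : 0 < q) (hq1 : q < 1)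
    (t t' L L' : ℝ) (ht : Irrational t) (ht' : Irrational t') (htt : t < t')
    (hL : IsQIrrDef q t L) (hL' : IsQIrrDef q t' L') :
    L < L' :=
  qdeform_irrational_strictMono_general q hq0 t t' L L' htt hL hL'
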